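/- Let p: ℝ → ℝ be smooth and 2π-periodic. Then for every σ ∈ ℝ, lim_{a→+∞} 𝓘₁(σ, a)/a = −c · (p(σ) + p(σ + π)) and lim_{a→+∞} a · 𝓘₂(σ, a) = −d · (p'(σ) + p'(σ + π)), where c := 2∫₀^{+∞} (t² − 1)/(t² + 1)^{5/2} dt and d := −4∫₀^{+∞} t²/(1 + t²)^{5/2} dt. -/

import Mathlib

open Real Set Filter Topology MeasureTheory intervalIntegral

/-- 𝓘₁(σ,a). -/
noncomputable def I1 (p : ℝ → ℝ) (σ a : ℝ) : ℝ :=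
  ∫ α in (0:ℝ)..(2 * π), p (α + σ) *
    ((a ^ 2)⁻¹ * Real.cos α ^ 2 - a ^ 2 * Real.sin α ^ 2) *
    ((a ^ 2)⁻¹ * Real.cos α ^ 2 + a ^ 2 * Real.sin α ^ 2) ^ (-(5:ℝ) / 2)

/-- 𝓘₂(σ,a). -/
noncomputable def I2 (p : ℝ → ℝ) (σ a : ℝ) : ℝ :=
  ∫ α in (0:ℝ)..(2 * π), p (α + σ) *
    (2 * Real.sin α * Real.cos α) *
    ((a ^ 2)⁻¹ * Real.cos α ^ 2 + a ^ 2 * Real.sin α ^ 2) ^ (-(5:ℝ) / 2)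

/-- The constant c = 2∫₀^∞ (t²-1)/(t²+1)^{5/2} dt. -/
noncomputable def cConst : ℝ :=
  2 * ∫ t in Ioi (0:ℝ), (t ^ 2 - 1) / (t ^ 2 + 1) ^ ((5:ℝ) / 2)

/-- The constant d = -4∫₀^∞ t²/(1+t²)^{5/2} dt. -/
noncomputable def dConst : ℝ :=
  -4 * ∫ t in Ioi (0:ℝ), t ^ 2 / (1 + t ^ 2) ^ ((5:ℝ) / 2)

lemma periodic_bound (f : ℝ → ℝ) (hf : Continuous f) (h : ∀ x, f (x + 2 * π) = f x) :
    ∃ M : ℝ, 0 ≤ M ∧ ∀ x, |f x| ≤ M := by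
  have hper : Function.Periodic f (2 * π) := h
  obtain ⟨C, hC⟩ := (isCompact_Icc (a := (0:ℝ)) (b := 2 * π)).exists_bound_of_continuousOn
    hf.continuousOn
  refine ⟨max C 0, le_max_right _ _, fun x => ?_⟩
  obtain ⟨y, hy, hxy⟩ := hper.exists_mem_Ico₀ (by positivity) x
  calc |f x| = |f y| := by rw [hxy]
    _ ≤ C := hC y ⟨hy.1, hy.2.le⟩
    _ ≤ max C 0 := le_max_left _ _

lemma lip_bound (f : ℝ → ℝ) (hf : Differentiable ℝ f) {M : ℝ}
    (hM : ∀ x, |deriv f x| ≤ M) (x y : ℝ) : |f x - f y| ≤ M * |x - y| := by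
  have := Convex.norm_image_sub_le_of_norm_deriv_le (s := Set.univ) (f := f)
    (fun z _ => hf z) (fun z _ => hM z) convex_univ (Set.mem_univ y) (Set.mem_univ x)
  simpa [Real.norm_eq_abs] using this

lemma arctan_le_self {x : ℝ} (hx : 0 ≤ x) : arctan x ≤ x := by
  have hd : ∀ z : ℝ, |deriv arctan z| ≤ 1 := by
    intro z
    rw [Real.deriv_arctan]
    rw [abs_of_pos (by positivity)]
    rw [div_le_one (by positivity)]
    nlinarith [sq_nonneg z]
  have := lip_bound arctan (fun z => (Real.hasDerivAt_arctan z).differentiableAt) hd x 0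
  simp only [arctan_zero, sub_zero] at this
  calc arctan x ≤ |arctan x| := le_abs_self _
    _ ≤ 1 * |x| := this
    _ = x := by rw [one_mul, abs_of_nonneg hx]

lemma arctan_pos' {x : ℝ} (hx : 0 < x) : 0 < arctan x := by
  have := Real.arctan_strictMono hx
  simpa using this

lemma arctan_image (a : ℝ) (ha : 0 < a) :
    (fun t => arctan (t / a ^ 2)) '' Ioi 0 = Ioo 0 (π / 2) := by
  ext α
  constructor
  · rintro ⟨t, ht, rfl⟩
    have ht' : (0:ℝ) < t := ht
    exact ⟨arctan_pos' (by positivity), arctan_lt_pi_div_two _⟩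
  · rintro ⟨h1, h2⟩
    have htan : 0 < tan α := tan_pos_of_pos_of_lt_pi_div_two h1 h2
    refine ⟨a ^ 2 * tan α, mem_Ioi.2 (by positivity), ?_⟩
    have : a ^ 2 * tan α / a ^ 2 = tan α := by
      field_simp
    simp only [this]
    exact arctan_tan (by linarith [pi_div_two_pos]) h2

lemma cov_lemma (a : ℝ) (ha : 0 < a) (g : ℝ → ℝ) :
    ∫ x in Ioo 0 (π / 2), g x
      = ∫ t in Ioi (0:ℝ), |(a ^ 2)⁻¹ / (1 + (t / a ^ 2) ^ 2)| * g (arctan (t / a ^ 2)) := by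
  have hderiv : ∀ t ∈ Ioi (0:ℝ),
      HasDerivWithinAt (fun t => arctan (t / a ^ 2))
        ((a ^ 2)⁻¹ / (1 + (t / a ^ 2) ^ 2)) (Ioi 0) t := by
    intro t _
    have h1 : HasDerivAt (fun t : ℝ => t / a ^ 2) ((a ^ 2)⁻¹) t := by
      simpa [div_eq_mul_inv] using (hasDerivAt_id t).mul_const ((a ^ 2)⁻¹)
    have h2 := (Real.hasDerivAt_arctan (t / a ^ 2)).comp t h1
    have : 1 / (1 + (t / a ^ 2) ^ 2) * (a ^ 2)⁻¹ = (a ^ 2)⁻¹ / (1 + (t / a ^ 2) ^ 2) := by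
      ring
    rw [this] at h2
    exact h2.hasDerivWithinAt
  have hinj : InjOn (fun t => arctan (t / a ^ 2)) (Ioi 0) := by
    intro s _ t _ h
    have := Real.arctan_injective h
    field_simp at this
    exact this
  have := MeasureTheory.integral_image_eq_integral_abs_deriv_smul measurableSet_Ioi hderiv hinj g
  rw [arctan_image a ha] at this
  rw [this]
  simp [smul_eq_mul]

-- trig squares at arctan
lemma cos_sq_arctan' (u : ℝ) : cos (arctan u) ^ 2 = (1 + u ^ 2)⁻¹ := by
  rw [Real.cos_arctan, div_pow, one_pow, sq_sqrt (by positivity), one_div]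

lemma sin_sq_arctan' (u : ℝ) : sin (arctan u) ^ 2 = u ^ 2 * (1 + u ^ 2)⁻¹ := by
  rw [Real.sin_arctan, div_pow, sq_sqrt (by positivity), div_eq_mul_inv]

lemma sin_mul_cos_arctan' (u : ℝ) : sin (arctan u) * cos (arctan u) = u * (1 + u ^ 2)⁻¹ := by
  rw [Real.sin_arctan, Real.cos_arctan]
  rw [div_mul_div_comm, mul_one, Real.mul_self_sqrt (by positivity), div_eq_mul_inv]

-- rpow helpers
lemma rpow_helper1 {b c d : ℝ} (hb : 0 < b) (hc : 0 < c) (hd : 0 < d) :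
    ((b)⁻¹ * (c * d⁻¹)) ^ (-(5:ℝ) / 2)
      = b ^ ((5:ℝ)/2) * c ^ (-(5:ℝ)/2) * d ^ ((5:ℝ)/2) := by
  rw [show (-(5:ℝ)/2) = -((5:ℝ)/2) by norm_num]
  rw [Real.rpow_neg (by positivity)]
  rw [Real.mul_rpow (by positivity) (by positivity), Real.mul_rpow (by positivity) (by positivity)]
  rw [Real.inv_rpow hb.le, Real.inv_rpow hd.le]
  rw [Real.rpow_neg hc.le]
  field_simp

lemma sq_rpow_five_halves {a : ℝ} (ha : 0 < a) : (a ^ 2) ^ ((5:ℝ)/2) = a ^ 5 := by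
  rw [← Real.rpow_natCast a 2, ← Real.rpow_mul ha.le,
    show ((2:ℕ):ℝ) * ((5:ℝ)/2) = ((5:ℕ):ℝ) by norm_num, Real.rpow_natCast]

lemma rpow_five_halves_eq {Y : ℝ} (hY : 0 < Y) : Y ^ ((5:ℝ)/2) = Y ^ 2 * Real.sqrt Y := by
  rw [Real.sqrt_eq_rpow, ← Real.rpow_natCast Y 2, ← Real.rpow_add hY]
  norm_num

-- main kernel lemma 1
lemma kernel1 (a t : ℝ) (ha : 0 < a) :
    |(a ^ 2)⁻¹ / (1 + (t / a ^ 2) ^ 2)| *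
      (((a ^ 2)⁻¹ * cos (arctan (t / a ^ 2)) ^ 2 - a ^ 2 * sin (arctan (t / a ^ 2)) ^ 2) *
        ((a ^ 2)⁻¹ * cos (arctan (t / a ^ 2)) ^ 2 + a ^ 2 * sin (arctan (t / a ^ 2)) ^ 2)
          ^ (-(5:ℝ) / 2))
    = a * ((1 - t ^ 2) * ((1 + t ^ 2) ^ (-(5:ℝ) / 2) * Real.sqrt (1 + (t / a ^ 2) ^ 2))) := by
  set u := t / a ^ 2 with hu
  have ha2 : (0:ℝ) < a ^ 2 := by positivity
  have hY : (0:ℝ) < 1 + u ^ 2 := by positivity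
  have hX : (0:ℝ) < 1 + t ^ 2 := by positivity
  have habs : |(a ^ 2)⁻¹ / (1 + u ^ 2)| = (a ^ 2)⁻¹ * (1 + u ^ 2)⁻¹ := by
    rw [abs_of_pos (by positivity), div_eq_mul_inv]
  have ht2 : a ^ 2 * u ^ 2 = t ^ 2 * (a ^ 2)⁻¹ := by
    rw [hu]; field_simp
  have hN : (a ^ 2)⁻¹ * cos (arctan u) ^ 2 - a ^ 2 * sin (arctan u) ^ 2
      = (a ^ 2)⁻¹ * (1 - t ^ 2) * (1 + u ^ 2)⁻¹ := by
    rw [cos_sq_arctan', sin_sq_arctan']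
    rw [show a ^ 2 * (u ^ 2 * (1 + u ^ 2)⁻¹) = (a ^ 2 * u ^ 2) * (1 + u ^ 2)⁻¹ by ring, ht2]
    ring
  have hD : (a ^ 2)⁻¹ * cos (arctan u) ^ 2 + a ^ 2 * sin (arctan u) ^ 2
      = (a ^ 2)⁻¹ * ((1 + t ^ 2) * (1 + u ^ 2)⁻¹) := by
    rw [cos_sq_arctan', sin_sq_arctan']
    rw [show a ^ 2 * (u ^ 2 * (1 + u ^ 2)⁻¹) = (a ^ 2 * u ^ 2) * (1 + u ^ 2)⁻¹ by ring, ht2]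
    ring
  rw [habs, hN, hD, rpow_helper1 ha2 hX hY, sq_rpow_five_halves ha, rpow_five_halves_eq hY]
  have hy := Real.sq_sqrt hY.le
  set y := Real.sqrt (1 + u ^ 2)
  set x5 := (1 + t ^ 2) ^ (-(5:ℝ)/2)
  have ha' : a ≠ 0 := ha.ne'
  have hy0 : y ≠ 0 := by
    intro h; rw [h] at hy; simp at hy; nlinarith
  field_simp

-- main kernel lemma 2
lemma kernel2 (a t : ℝ) (ha : 0 < a) :
    |(a ^ 2)⁻¹ / (1 + (t / a ^ 2) ^ 2)| *
      ((2 * sin (arctan (t / a ^ 2)) * cos (arctan (t / a ^ 2))) *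
        ((a ^ 2)⁻¹ * cos (arctan (t / a ^ 2)) ^ 2 + a ^ 2 * sin (arctan (t / a ^ 2)) ^ 2)
          ^ (-(5:ℝ) / 2))
    = a * (2 * t * ((1 + t ^ 2) ^ (-(5:ℝ) / 2) * Real.sqrt (1 + (t / a ^ 2) ^ 2))) := by
  set u := t / a ^ 2 with hu
  have ha2 : (0:ℝ) < a ^ 2 := by positivity
  have hY : (0:ℝ) < 1 + u ^ 2 := by positivity
  have hX : (0:ℝ) < 1 + t ^ 2 := by positivity
  have habs : |(a ^ 2)⁻¹ / (1 + u ^ 2)| = (a ^ 2)⁻¹ * (1 + u ^ 2)⁻¹ := by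
    rw [abs_of_pos (by positivity), div_eq_mul_inv]
  have hD : (a ^ 2)⁻¹ * cos (arctan u) ^ 2 + a ^ 2 * sin (arctan u) ^ 2
      = (a ^ 2)⁻¹ * ((1 + t ^ 2) * (1 + u ^ 2)⁻¹) := by
    rw [cos_sq_arctan', sin_sq_arctan']
    rw [show a ^ 2 * (u ^ 2 * (1 + u ^ 2)⁻¹) = (a ^ 2 * u ^ 2) * (1 + u ^ 2)⁻¹ by ring,
      show a ^ 2 * u ^ 2 = t ^ 2 * (a ^ 2)⁻¹ by rw [hu]; field_simp]
    ring
  have hsc : 2 * sin (arctan u) * cos (arctan u) = 2 * u * (1 + u ^ 2)⁻¹ := by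
    rw [mul_assoc, sin_mul_cos_arctan']; ring
  rw [habs, hsc, hD, rpow_helper1 ha2 hX hY, sq_rpow_five_halves ha, rpow_five_halves_eq hY]
  have hy := Real.sq_sqrt hY.le
  set y := Real.sqrt (1 + u ^ 2)
  set x5 := (1 + t ^ 2) ^ (-(5:ℝ)/2)
  have ha' : a ≠ 0 := ha.ne'
  have hy0 : y ≠ 0 := by
    intro h; rw [h] at hy; simp at hy; nlinarith
  have hut : u = t / a ^ 2 := hu
  field_simp [hut]
  rw [hut]; field_simp

lemma split_reflect (f : ℝ → ℝ) (hf : Continuous f) :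
    ∫ x in (0:ℝ)..(2*π), f x
      = (∫ x in (0:ℝ)..(π/2), f x) + (∫ x in (0:ℝ)..(π/2), f (π - x))
        + ((∫ x in (0:ℝ)..(π/2), f (π + x)) + (∫ x in (0:ℝ)..(π/2), f (2*π - x))) := by
  have hii : ∀ x y : ℝ, IntervalIntegrable f volume x y := fun x y => hf.intervalIntegrable x y
  have e1 := integral_add_adjacent_intervals (a := (0:ℝ)) (b := π/2) (c := π)
    (hii _ _) (hii _ _)
  have e2 := integral_add_adjacent_intervals (a := (0:ℝ)) (b := π) (c := 3*π/2)
    (hii _ _) (hii _ _)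
  have e3 := integral_add_adjacent_intervals (a := (0:ℝ)) (b := 3*π/2) (c := 2*π)
    (hii _ _) (hii _ _)
  have r2 : (∫ x in (0:ℝ)..(π/2), f (π - x)) = ∫ x in (π/2:ℝ)..π, f x := by
    rw [integral_comp_sub_left f π]; congr 1 <;> ring
  have r3 : (∫ x in (0:ℝ)..(π/2), f (π + x)) = ∫ x in (π:ℝ)..(3*π/2), f x := by
    rw [integral_comp_add_left f π]; congr 1 <;> ring
  have r4 : (∫ x in (0:ℝ)..(π/2), f (2*π - x)) = ∫ x in (3*π/2:ℝ)..(2*π), f x := by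
    rw [integral_comp_sub_left f (2*π)]; congr 1 <;> ring
  rw [r2, r3, r4]; linarith

lemma interval_to_Ioo (g : ℝ → ℝ) :
    ∫ x in (0:ℝ)..(π/2), g x = ∫ x in Ioo (0:ℝ) (π/2), g x := by
  rw [integral_of_le (by positivity), MeasureTheory.integral_Ioc_eq_integral_Ioo]

lemma integrableOn_aux {C : ℝ} {f : ℝ → ℝ}
    (hmeas : AEStronglyMeasurable f (volume.restrict (Ioi 0)))
    (hbd : ∀ t ∈ Ioi (0:ℝ), |f t| ≤ C * (1+t^2)⁻¹) : IntegrableOn f (Ioi 0) := by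
  have hint : Integrable (fun t : ℝ => C * (1+t^2)⁻¹) := integrable_inv_one_add_sq.const_mul C
  refine Integrable.mono hint.integrableOn hmeas ?_
  refine (ae_restrict_iff' measurableSet_Ioi).2 (Filter.Eventually.of_forall fun t ht => ?_)
  calc ‖f t‖ = |f t| := rfl
    _ ≤ C * (1+t^2)⁻¹ := hbd t ht
    _ ≤ ‖C * (1+t^2)⁻¹‖ := le_abs_self _

lemma ker_sq_eq (t : ℝ) : (1+t^2) ^ (-(5:ℝ)/2) * Real.sqrt (1+t^2) = ((1+t^2)^2)⁻¹ := by
  have hX : (0:ℝ) < 1 + t^2 := by positivity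
  rw [Real.sqrt_eq_rpow, ← Real.rpow_add hX,
    show (-(5:ℝ)/2 + 1/2 : ℝ) = -((2:ℕ):ℝ) by norm_num,
    Real.rpow_neg hX.le, Real.rpow_natCast]

lemma ker_nonneg (a t : ℝ) : 0 ≤ (1+t^2) ^ (-(5:ℝ)/2) * Real.sqrt (1+(t/a^2)^2) := by
  positivity

lemma ker_le {a t : ℝ} (ha : 1 ≤ a) :
    (1+t^2) ^ (-(5:ℝ)/2) * Real.sqrt (1+(t/a^2)^2) ≤ ((1+t^2)^2)⁻¹ := by
  have h1 : (t/a^2)^2 ≤ t^2 := by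
    rw [div_pow]
    have h2 : (1:ℝ) ≤ (a^2)^2 := by nlinarith [sq_nonneg (a-1), sq_nonneg (a^2-1), sq_nonneg a]
    calc t^2 / (a^2)^2 ≤ t^2 / 1 := by
          apply div_le_div_of_nonneg_left ?_ ?_ h2 <;> first | positivity | nlinarith
      _ = t^2 := by ring
    
  calc (1+t^2) ^ (-(5:ℝ)/2) * Real.sqrt (1+(t/a^2)^2)
      ≤ (1+t^2) ^ (-(5:ℝ)/2) * Real.sqrt (1+t^2) := by
        apply mul_le_mul_of_nonneg_left (Real.sqrt_le_sqrt (by linarith)) (by positivity)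
    _ = ((1+t^2)^2)⁻¹ := ker_sq_eq t

lemma X_mul_ker_bound (t : ℝ) : (1+t^2) * ((1+t^2)^2)⁻¹ = (1+t^2)⁻¹ := by
  have hX : (0:ℝ) < 1 + t^2 := by positivity
  field_simp

-- continuity of the α-integrand pieces
lemma D_pos (a : ℝ) (ha : 0 < a) (α : ℝ) :
    0 < (a^2)⁻¹ * cos α ^ 2 + a^2 * sin α ^ 2 := by
  have h := sin_sq_add_cos_sq α
  have h1 : (0:ℝ) < (a^2)⁻¹ := by positivity
  have h2 : (0:ℝ) < a^2 := by positivity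
  rcases le_total (sin α ^ 2) (cos α ^ 2) with h'|h'
  · have hc : (0:ℝ) < cos α ^ 2 := by nlinarith [sq_nonneg (sin α)]
    have := mul_pos h1 hc
    nlinarith [mul_nonneg h2.le (sq_nonneg (sin α))]
  · have hs : (0:ℝ) < sin α ^ 2 := by nlinarith [sq_nonneg (cos α)]
    have := mul_pos h2 hs
    nlinarith [mul_nonneg h1.le (sq_nonneg (cos α))]

lemma D_rpow_continuous (a : ℝ) (ha : 0 < a) :
    Continuous fun α : ℝ => ((a^2)⁻¹ * cos α ^ 2 + a^2 * sin α ^ 2) ^ (-(5:ℝ)/2) := by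
  apply Continuous.rpow_const
  · fun_prop
  · exact fun α => Or.inl (D_pos a ha α).ne'

lemma quarterA (a : ℝ) (ha : 0 < a) (q : ℝ → ℝ) :
    (∫ β in Ioo (0:ℝ) (π/2), q β *
      (((a^2)⁻¹ * cos β ^ 2 - a^2 * sin β ^ 2) *
        ((a^2)⁻¹ * cos β ^ 2 + a^2 * sin β ^ 2) ^ (-(5:ℝ)/2)))
    = ∫ t in Ioi (0:ℝ), q (arctan (t/a^2)) *
        (a * ((1 - t^2) * ((1+t^2) ^ (-(5:ℝ)/2) * Real.sqrt (1+(t/a^2)^2)))) := by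
  rw [cov_lemma a ha]
  apply MeasureTheory.setIntegral_congr_fun measurableSet_Ioi
  intro t _
  simp only
  rw [← kernel1 a t ha]
  ring

lemma quarterB (a : ℝ) (ha : 0 < a) (q : ℝ → ℝ) :
    (∫ β in Ioo (0:ℝ) (π/2), q β *
      ((2 * sin β * cos β) *
        ((a^2)⁻¹ * cos β ^ 2 + a^2 * sin β ^ 2) ^ (-(5:ℝ)/2)))
    = ∫ t in Ioi (0:ℝ), q (arctan (t/a^2)) *
        (a * (2 * t * ((1+t^2) ^ (-(5:ℝ)/2) * Real.sqrt (1+(t/a^2)^2)))) := by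
  rw [cov_lemma a ha]
  apply MeasureTheory.setIntegral_congr_fun measurableSet_Ioi
  intro t _
  simp only
  rw [← kernel2 a t ha]
  ring





lemma X_rpow_cont : Continuous fun t : ℝ => (1+t^2) ^ (-(5:ℝ)/2) := by
  apply Continuous.rpow_const (by fun_prop)
  intro t
  left
  positivity

lemma kerf_cont (a : ℝ) : Continuous fun t : ℝ =>
    (1+t^2) ^ (-(5:ℝ)/2) * Real.sqrt (1+(t/a^2)^2) :=
  X_rpow_cont.mul (Real.continuous_sqrt.comp (by fun_prop))

lemma piece_bound {M₀ a t : ℝ} (ha : 1 ≤ a) (v w : ℝ) (hv : |v| ≤ M₀) (hw : |w| ≤ 1+t^2) :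
    |v * (a * (w * ((1+t^2) ^ (-(5:ℝ)/2) * Real.sqrt (1+(t/a^2)^2))))|
      ≤ (M₀ * a) * (1+t^2)⁻¹ := by
  have ha0 : (0:ℝ) < a := lt_of_lt_of_le one_pos ha
  have hk0 := ker_nonneg a t
  have hkle := ker_le (t := t) ha
  have hM₀ : 0 ≤ M₀ := (abs_nonneg v).trans hv
  have : (M₀ * a) * (1+t^2)⁻¹ = M₀ * (a * ((1+t^2) * ((1+t^2)^2)⁻¹)) := by
    rw [X_mul_ker_bound]; ring
  rw [this, abs_mul, abs_mul, abs_mul, abs_of_pos ha0, abs_of_nonneg hk0]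
  gcongr

lemma piece_integrable {M₀ a : ℝ} (ha : 1 ≤ a) (f w : ℝ → ℝ)
    (hfc : Continuous f) (hwc : Continuous w)
    (hf : ∀ t, |f t| ≤ M₀) (hw : ∀ t, |w t| ≤ 1 + t^2) :
    IntegrableOn (fun t : ℝ => f t *
      (a * (w t * ((1+t^2) ^ (-(5:ℝ)/2) * Real.sqrt (1+(t/a^2)^2))))) (Ioi 0) := by
  apply integrableOn_aux (C := M₀ * a)
  · exact ((hfc.mul (continuous_const.mul (hwc.mul (kerf_cont a)))).aestronglyMeasurable)
  · intro t _
    exact piece_bound ha _ _ (hf t) (hw t)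
lemma four_sum {μ : Measure ℝ} (f1 f2 f3 f4 g : ℝ → ℝ)
    (h1 : Integrable f1 μ) (h2 : Integrable f2 μ) (h3 : Integrable f3 μ)
    (h4 : Integrable f4 μ) (hg : ∀ t, f1 t + f2 t + (f3 t + f4 t) = g t) :
    (∫ t, f1 t ∂μ) + (∫ t, f2 t ∂μ) + ((∫ t, f3 t ∂μ) + (∫ t, f4 t ∂μ)) = ∫ t, g t ∂μ := by
  have h12 : Integrable (fun t => f1 t + f2 t) μ := h1.add h2
  have h34 : Integrable (fun t => f3 t + f4 t) μ := h3.add h4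
  have hgg : ∫ t, g t ∂μ = ∫ t, (f1 t + f2 t) + (f3 t + f4 t) ∂μ :=
    MeasureTheory.integral_congr_ae (Filter.Eventually.of_forall fun t => (hg t).symm)
  rw [hgg, MeasureTheory.integral_add h12 h34, MeasureTheory.integral_add h1 h2,
    MeasureTheory.integral_add h3 h4]

lemma I1_eq (p : ℝ → ℝ) (hpc : Continuous p) {M₀ : ℝ} (hM : ∀ x, |p x| ≤ M₀)
    (σ : ℝ) {a : ℝ} (ha : 1 ≤ a) :
    I1 p σ a = a * ∫ t in Ioi (0:ℝ),
      (p (arctan (t/a^2) + σ) + p (π - arctan (t/a^2) + σ) +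
        (p (π + arctan (t/a^2) + σ) + p (2*π - arctan (t/a^2) + σ)))
      * ((1 - t^2) * ((1+t^2) ^ (-(5:ℝ)/2) * Real.sqrt (1+(t/a^2)^2))) := by
  have ha0 : (0:ℝ) < a := lt_of_lt_of_le one_pos ha
  have hDc := D_rpow_continuous a ha0
  have hcont : Continuous (fun α : ℝ => p (α + σ) *
      ((a^2)⁻¹ * cos α ^ 2 - a^2 * sin α ^ 2) *
      ((a^2)⁻¹ * cos α ^ 2 + a^2 * sin α ^ 2) ^ (-(5:ℝ)/2)) := by
    exact ((hpc.comp (by fun_prop)).mul (by fun_prop)).mul hDc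
  have hsplit := split_reflect _ hcont
  rw [I1, hsplit]
  -- transform the four quarter integrals
  have hq1 : (∫ x in (0:ℝ)..(π/2), p (x + σ) *
      ((a^2)⁻¹ * cos x ^ 2 - a^2 * sin x ^ 2) *
      ((a^2)⁻¹ * cos x ^ 2 + a^2 * sin x ^ 2) ^ (-(5:ℝ)/2))
      = ∫ t in Ioi (0:ℝ), p (arctan (t/a^2) + σ) *
        (a * ((1 - t^2) * ((1+t^2) ^ (-(5:ℝ)/2) * Real.sqrt (1+(t/a^2)^2)))) := by
    rw [interval_to_Ioo, ← quarterA a ha0 (fun β => p (β + σ))]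
    apply MeasureTheory.setIntegral_congr_fun measurableSet_Ioo
    intro x _; simp only; ring
  have hq2 : (∫ x in (0:ℝ)..(π/2), p (π - x + σ) *
      ((a^2)⁻¹ * cos (π - x) ^ 2 - a^2 * sin (π - x) ^ 2) *
      ((a^2)⁻¹ * cos (π - x) ^ 2 + a^2 * sin (π - x) ^ 2) ^ (-(5:ℝ)/2))
      = ∫ t in Ioi (0:ℝ), p (π - arctan (t/a^2) + σ) *
        (a * ((1 - t^2) * ((1+t^2) ^ (-(5:ℝ)/2) * Real.sqrt (1+(t/a^2)^2)))) := by
    rw [interval_to_Ioo, ← quarterA a ha0 (fun β => p (π - β + σ))]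
    apply MeasureTheory.setIntegral_congr_fun measurableSet_Ioo
    intro x _; simp only [cos_pi_sub, sin_pi_sub, neg_sq]; ring
  have hq3 : (∫ x in (0:ℝ)..(π/2), p (π + x + σ) *
      ((a^2)⁻¹ * cos (π + x) ^ 2 - a^2 * sin (π + x) ^ 2) *
      ((a^2)⁻¹ * cos (π + x) ^ 2 + a^2 * sin (π + x) ^ 2) ^ (-(5:ℝ)/2))
      = ∫ t in Ioi (0:ℝ), p (π + arctan (t/a^2) + σ) *
        (a * ((1 - t^2) * ((1+t^2) ^ (-(5:ℝ)/2) * Real.sqrt (1+(t/a^2)^2)))) := by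
    rw [interval_to_Ioo, ← quarterA a ha0 (fun β => p (π + β + σ))]
    apply MeasureTheory.setIntegral_congr_fun measurableSet_Ioo
    intro x _; simp only [cos_add, sin_add, cos_pi, sin_pi]; ring
  have hq4 : (∫ x in (0:ℝ)..(π/2), p (2*π - x + σ) *
      ((a^2)⁻¹ * cos (2*π - x) ^ 2 - a^2 * sin (2*π - x) ^ 2) *
      ((a^2)⁻¹ * cos (2*π - x) ^ 2 + a^2 * sin (2*π - x) ^ 2) ^ (-(5:ℝ)/2))
      = ∫ t in Ioi (0:ℝ), p (2*π - arctan (t/a^2) + σ) *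
        (a * ((1 - t^2) * ((1+t^2) ^ (-(5:ℝ)/2) * Real.sqrt (1+(t/a^2)^2)))) := by
    rw [interval_to_Ioo, ← quarterA a ha0 (fun β => p (2*π - β + σ))]
    apply MeasureTheory.setIntegral_congr_fun measurableSet_Ioo
    intro x _
    simp only [cos_sub, sin_sub, cos_two_pi, sin_two_pi]
    ring
  rw [hq1, hq2, hq3, hq4]
  have hw1 : ∀ t : ℝ, |1 - t^2| ≤ 1 + t^2 := fun t =>
    abs_le.2 ⟨by nlinarith [sq_nonneg t], by nlinarith [sq_nonneg t]⟩
  have harc : Continuous fun t : ℝ => arctan (t / a^2) :=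
    Real.continuous_arctan.comp (by fun_prop)
  have i1 : IntegrableOn (fun t : ℝ => p (arctan (t/a^2) + σ) *
      (a * ((1 - t^2) * ((1+t^2) ^ (-(5:ℝ)/2) * Real.sqrt (1+(t/a^2)^2))))) (Ioi 0) :=
    piece_integrable ha _ _ (hpc.comp (harc.add continuous_const)) (by fun_prop)
      (fun t => hM _) hw1
  have i2 : IntegrableOn (fun t : ℝ => p (π - arctan (t/a^2) + σ) *
      (a * ((1 - t^2) * ((1+t^2) ^ (-(5:ℝ)/2) * Real.sqrt (1+(t/a^2)^2))))) (Ioi 0) :=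
    piece_integrable ha _ _ (hpc.comp ((continuous_const.sub harc).add continuous_const))
      (by fun_prop) (fun t => hM _) hw1
  have i3 : IntegrableOn (fun t : ℝ => p (π + arctan (t/a^2) + σ) *
      (a * ((1 - t^2) * ((1+t^2) ^ (-(5:ℝ)/2) * Real.sqrt (1+(t/a^2)^2))))) (Ioi 0) :=
    piece_integrable ha _ _ (hpc.comp ((continuous_const.add harc).add continuous_const))
      (by fun_prop) (fun t => hM _) hw1
  have i4 : IntegrableOn (fun t : ℝ => p (2*π - arctan (t/a^2) + σ) *
      (a * ((1 - t^2) * ((1+t^2) ^ (-(5:ℝ)/2) * Real.sqrt (1+(t/a^2)^2))))) (Ioi 0) :=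
    piece_integrable ha _ _ (hpc.comp ((continuous_const.sub harc).add continuous_const))
      (by fun_prop) (fun t => hM _) hw1
  refine (four_sum _ _ _ _
      (fun t => a * ((p (arctan (t/a^2) + σ) + p (π - arctan (t/a^2) + σ) +
        (p (π + arctan (t/a^2) + σ) + p (2*π - arctan (t/a^2) + σ)))
        * ((1 - t^2) * ((1+t^2) ^ (-(5:ℝ)/2) * Real.sqrt (1+(t/a^2)^2)))))
      i1 i2 i3 i4 (fun t => by ring)).trans (MeasureTheory.integral_const_mul a _)

lemma I2_eq (p : ℝ → ℝ) (hpc : Continuous p) {M₀ : ℝ} (hM : ∀ x, |p x| ≤ M₀)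
    (hper : ∀ α, p (α + 2 * π) = p α)
    (σ : ℝ) {a : ℝ} (ha : 1 ≤ a) :
    I2 p σ a = a * ∫ t in Ioi (0:ℝ),
      ((p (arctan (t/a^2) + σ) - p (-arctan (t/a^2) + σ)) +
        (p (π + arctan (t/a^2) + σ) - p (π - arctan (t/a^2) + σ)))
      * (2 * t * ((1+t^2) ^ (-(5:ℝ)/2) * Real.sqrt (1+(t/a^2)^2))) := by
  have ha0 : (0:ℝ) < a := lt_of_lt_of_le one_pos ha
  have hDc := D_rpow_continuous a ha0
  have hcont : Continuous (fun α : ℝ => p (α + σ) *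
      (2 * sin α * cos α) *
      ((a^2)⁻¹ * cos α ^ 2 + a^2 * sin α ^ 2) ^ (-(5:ℝ)/2)) := by
    exact ((hpc.comp (by fun_prop)).mul (by fun_prop)).mul hDc
  have hsplit := split_reflect _ hcont
  rw [I2, hsplit]
  have hq1 : (∫ x in (0:ℝ)..(π/2), p (x + σ) * (2 * sin x * cos x) *
      ((a^2)⁻¹ * cos x ^ 2 + a^2 * sin x ^ 2) ^ (-(5:ℝ)/2))
      = ∫ t in Ioi (0:ℝ), p (arctan (t/a^2) + σ) *
        (a * (2 * t * ((1+t^2) ^ (-(5:ℝ)/2) * Real.sqrt (1+(t/a^2)^2)))) := by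
    rw [interval_to_Ioo, ← quarterB a ha0 (fun β => p (β + σ))]
    apply MeasureTheory.setIntegral_congr_fun measurableSet_Ioo
    intro x _; simp only; ring
  have hq2 : (∫ x in (0:ℝ)..(π/2), p (π - x + σ) * (2 * sin (π - x) * cos (π - x)) *
      ((a^2)⁻¹ * cos (π - x) ^ 2 + a^2 * sin (π - x) ^ 2) ^ (-(5:ℝ)/2))
      = ∫ t in Ioi (0:ℝ), (-p (π - arctan (t/a^2) + σ)) *
        (a * (2 * t * ((1+t^2) ^ (-(5:ℝ)/2) * Real.sqrt (1+(t/a^2)^2)))) := by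
    rw [interval_to_Ioo, ← quarterB a ha0 (fun β => -p (π - β + σ))]
    apply MeasureTheory.setIntegral_congr_fun measurableSet_Ioo
    intro x _; simp only [cos_pi_sub, sin_pi_sub, neg_sq]; ring
  have hq3 : (∫ x in (0:ℝ)..(π/2), p (π + x + σ) * (2 * sin (π + x) * cos (π + x)) *
      ((a^2)⁻¹ * cos (π + x) ^ 2 + a^2 * sin (π + x) ^ 2) ^ (-(5:ℝ)/2))
      = ∫ t in Ioi (0:ℝ), p (π + arctan (t/a^2) + σ) *
        (a * (2 * t * ((1+t^2) ^ (-(5:ℝ)/2) * Real.sqrt (1+(t/a^2)^2)))) := by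
    rw [interval_to_Ioo, ← quarterB a ha0 (fun β => p (π + β + σ))]
    apply MeasureTheory.setIntegral_congr_fun measurableSet_Ioo
    intro x _; simp only [cos_add, sin_add, cos_pi, sin_pi]; ring
  have hq4 : (∫ x in (0:ℝ)..(π/2), p (2*π - x + σ) * (2 * sin (2*π - x) * cos (2*π - x)) *
      ((a^2)⁻¹ * cos (2*π - x) ^ 2 + a^2 * sin (2*π - x) ^ 2) ^ (-(5:ℝ)/2))
      = ∫ t in Ioi (0:ℝ), (-p (2*π - arctan (t/a^2) + σ)) *
        (a * (2 * t * ((1+t^2) ^ (-(5:ℝ)/2) * Real.sqrt (1+(t/a^2)^2)))) := by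
    rw [interval_to_Ioo, ← quarterB a ha0 (fun β => -p (2*π - β + σ))]
    apply MeasureTheory.setIntegral_congr_fun measurableSet_Ioo
    intro x _; simp only [cos_sub, sin_sub, cos_two_pi, sin_two_pi]; ring
  have hq4' : (∫ t in Ioi (0:ℝ), (-p (2*π - arctan (t/a^2) + σ)) *
        (a * (2 * t * ((1+t^2) ^ (-(5:ℝ)/2) * Real.sqrt (1+(t/a^2)^2)))))
      = ∫ t in Ioi (0:ℝ), (-p (-arctan (t/a^2) + σ)) *
        (a * (2 * t * ((1+t^2) ^ (-(5:ℝ)/2) * Real.sqrt (1+(t/a^2)^2)))) := by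
    apply MeasureTheory.setIntegral_congr_fun measurableSet_Ioi
    intro t _
    simp only
    rw [show 2*π - arctan (t/a^2) + σ = (-arctan (t/a^2) + σ) + 2*π by ring, hper]
  rw [hq1, hq2, hq3, hq4, hq4']
  have hw2 : ∀ t : ℝ, |2 * t| ≤ 1 + t^2 := fun t => by
    rw [abs_mul, abs_two]
    nlinarith [sq_nonneg (|t| - 1), sq_abs t, abs_nonneg t]
  have harc : Continuous fun t : ℝ => arctan (t / a^2) :=
    Real.continuous_arctan.comp (by fun_prop)
  have hM' : ∀ x, |(-p x : ℝ)| ≤ M₀ := fun x => by rw [abs_neg]; exact hM x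
  have i1 : IntegrableOn (fun t : ℝ => p (arctan (t/a^2) + σ) *
      (a * (2 * t * ((1+t^2) ^ (-(5:ℝ)/2) * Real.sqrt (1+(t/a^2)^2))))) (Ioi 0) :=
    piece_integrable ha _ _ (hpc.comp (harc.add continuous_const)) (by fun_prop)
      (fun t => hM _) hw2
  have i2 : IntegrableOn (fun t : ℝ => (-p (π - arctan (t/a^2) + σ)) *
      (a * (2 * t * ((1+t^2) ^ (-(5:ℝ)/2) * Real.sqrt (1+(t/a^2)^2))))) (Ioi 0) :=
    piece_integrable ha _ _
      (hpc.comp ((continuous_const.sub harc).add continuous_const)).neg (by fun_prop)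
      (fun t => hM' _) hw2
  have i3 : IntegrableOn (fun t : ℝ => p (π + arctan (t/a^2) + σ) *
      (a * (2 * t * ((1+t^2) ^ (-(5:ℝ)/2) * Real.sqrt (1+(t/a^2)^2))))) (Ioi 0) :=
    piece_integrable ha _ _ (hpc.comp ((continuous_const.add harc).add continuous_const))
      (by fun_prop) (fun t => hM _) hw2
  have i4 : IntegrableOn (fun t : ℝ => (-p (-arctan (t/a^2) + σ)) *
      (a * (2 * t * ((1+t^2) ^ (-(5:ℝ)/2) * Real.sqrt (1+(t/a^2)^2))))) (Ioi 0) :=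
    piece_integrable ha _ _ (hpc.comp (harc.neg.add continuous_const)).neg (by fun_prop)
      (fun t => hM' _) hw2
  refine (four_sum _ _ _ _
      (fun t => a * (((p (arctan (t/a^2) + σ) - p (-arctan (t/a^2) + σ)) +
        (p (π + arctan (t/a^2) + σ) - p (π - arctan (t/a^2) + σ)))
        * (2 * t * ((1+t^2) ^ (-(5:ℝ)/2) * Real.sqrt (1+(t/a^2)^2)))))
      i1 i2 i3 i4 (fun t => by ring)).trans (MeasureTheory.integral_const_mul a _)

lemma tends_div_sq (t : ℝ) : Tendsto (fun a : ℝ => t / a^2) atTop (𝓝 0) := by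
  have h : Tendsto (fun a : ℝ => a^2) atTop atTop := tendsto_pow_atTop two_ne_zero
  have := h.inv_tendsto_atTop
  have := this.const_mul t
  simpa [div_eq_mul_inv] using this

lemma tends_sqrtY (t : ℝ) :
    Tendsto (fun a : ℝ => Real.sqrt (1 + (t/a^2)^2)) atTop (𝓝 1) := by
  have h1 : Tendsto (fun a : ℝ => 1 + (t/a^2)^2) atTop (𝓝 1) := by
    have := ((tends_div_sq t).mul (tends_div_sq t)).const_add 1
    simpa [pow_two] using this
  have := (Real.continuous_sqrt.tendsto 1).comp h1
  simpa [Function.comp_def] using this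

lemma tends_arctan (t : ℝ) :
    Tendsto (fun a : ℝ => arctan (t/a^2)) atTop (𝓝 0) := by
  have := (Real.continuous_arctan.tendsto 0).comp (tends_div_sq t)
  simpa [Function.comp_def] using this

lemma piece_bound' {C a t : ℝ} (ha : 1 ≤ a) (v w : ℝ) (hv : |v| ≤ C) (hw : |w| ≤ 1+t^2) :
    |v * (w * ((1+t^2) ^ (-(5:ℝ)/2) * Real.sqrt (1+(t/a^2)^2)))| ≤ C * (1+t^2)⁻¹ := by
  have hk0 := ker_nonneg a t
  have hkle := ker_le (t := t) ha
  have hC : 0 ≤ C := (abs_nonneg v).trans hv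
  have : C * (1+t^2)⁻¹ = C * ((1+t^2) * ((1+t^2)^2)⁻¹) := by
    rw [X_mul_ker_bound]
  rw [this, abs_mul, abs_mul, abs_of_nonneg hk0]
  gcongr

lemma G_bound {M₁ a t : ℝ} (ha : 1 ≤ a) (ht : 0 < t) (d1 d2 : ℝ) (hM₁ : 0 ≤ M₁)
    (h1 : |d1| ≤ M₁ * (2 * arctan (t/a^2))) (h2 : |d2| ≤ M₁ * (2 * arctan (t/a^2))) :
    |a^2 * ((d1 + d2) * (2*t*((1+t^2) ^ (-(5:ℝ)/2) * Real.sqrt (1+(t/a^2)^2))))|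
      ≤ (8*M₁) * (1+t^2)⁻¹ := by
  have ha0 : (0:ℝ) < a := lt_of_lt_of_le one_pos ha
  have hu0 : (0:ℝ) ≤ t / a^2 := by positivity
  have hε0 : 0 ≤ arctan (t/a^2) := by
    rcases eq_or_lt_of_le hu0 with h|h
    · simp [← h]
    · exact (arctan_pos' h).le
  have hεt : a^2 * arctan (t/a^2) ≤ t := by
    calc a^2 * arctan (t/a^2) ≤ a^2 * (t/a^2) :=
          mul_le_mul_of_nonneg_left (arctan_le_self hu0) (by positivity)
      _ = t := by field_simp
  have hd : |d1 + d2| ≤ 4 * M₁ * arctan (t/a^2) := by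
    calc |d1 + d2| ≤ |d1| + |d2| := abs_add_le _ _
      _ ≤ 4 * M₁ * arctan (t/a^2) := by linarith
  have hk0 := ker_nonneg a t
  have hkle := ker_le (t := t) ha
  have hX : (0:ℝ) < 1 + t^2 := by positivity
  have key : a^2 * |d1 + d2| ≤ 4 * M₁ * t := by
    calc a^2 * |d1+d2| ≤ a^2 * (4*M₁*arctan (t/a^2)) :=
          mul_le_mul_of_nonneg_left hd (by positivity)
      _ = 4*M₁*(a^2*arctan (t/a^2)) := by ring
      _ ≤ 4*M₁*t := mul_le_mul_of_nonneg_left hεt (by positivity)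
  have habs : |a^2 * ((d1 + d2) * (2*t*((1+t^2) ^ (-(5:ℝ)/2) * Real.sqrt (1+(t/a^2)^2))))|
      = (a^2 * |d1 + d2|) * (2*t*((1+t^2) ^ (-(5:ℝ)/2) * Real.sqrt (1+(t/a^2)^2))) := by
    rw [abs_mul, abs_mul, abs_of_nonneg (sq_nonneg a),
      abs_of_nonneg (by positivity : (0:ℝ) ≤ 2*t*((1+t^2) ^ (-(5:ℝ)/2) * Real.sqrt (1+(t/a^2)^2)))]
    ring
  rw [habs]
  calc (a^2 * |d1 + d2|) * (2*t*((1+t^2) ^ (-(5:ℝ)/2) * Real.sqrt (1+(t/a^2)^2)))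
      ≤ (4*M₁*t) * (2*t*((1+t^2)^2)⁻¹) := by
        apply mul_le_mul key _ (by positivity) (by positivity)
        exact mul_le_mul_of_nonneg_left hkle (by positivity)
    _ = (8*M₁) * (t^2 * ((1+t^2)^2)⁻¹) := by ring
    _ ≤ (8*M₁) * ((1+t^2) * ((1+t^2)^2)⁻¹) := by
        apply mul_le_mul_of_nonneg_left _ (by positivity)
        apply mul_le_mul_of_nonneg_right (by nlinarith) (by positivity)
    _ = (8*M₁) * (1+t^2)⁻¹ := by rw [X_mul_ker_bound]

lemma point1 (t : ℝ) : (1 - t^2) * (1+t^2) ^ (-(5:ℝ)/2)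
    = -((t^2-1) / (t^2+1) ^ ((5:ℝ)/2)) := by
  have h : (t^2+1:ℝ) = 1+t^2 := by ring
  rw [h, show (-(5:ℝ)/2) = -((5:ℝ)/2) by norm_num, Real.rpow_neg (by positivity),
    div_eq_mul_inv]
  ring

lemma point2 (t : ℝ) : 4*t^2*(1+t^2) ^ (-(5:ℝ)/2) = 4*(t^2 / (1+t^2) ^ ((5:ℝ)/2)) := by
  rw [show (-(5:ℝ)/2) = -((5:ℝ)/2) by norm_num, Real.rpow_neg (by positivity),
    div_eq_mul_inv]
  ring

/-- The limits of 𝓘₁(σ,a)/a and a·𝓘₂(σ,a) as a → +∞. -/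
theorem limits_I1_I2_atTop
    (p : ℝ → ℝ) (hp : ContDiff ℝ (⊤ : ℕ∞) p) (hper : ∀ α, p (α + 2 * π) = p α) :
    ∀ σ : ℝ,
      Tendsto (fun a : ℝ => I1 p σ a / a) atTop
        (𝓝 (-cConst * (p σ + p (σ + π)))) ∧
      Tendsto (fun a : ℝ => a * I2 p σ a) atTop
        (𝓝 (-dConst * (deriv p σ + deriv p (σ + π)))) := by
  have hpc : Continuous p := hp.continuous
  have hpd : Differentiable ℝ p := hp.differentiable (by simp)
  have hdc : Continuous (deriv p) := hp.continuous_deriv (by simp)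
  obtain ⟨M₀, hM₀0, hM₀⟩ := periodic_bound p hpc hper
  have hperd : ∀ x, deriv p (x + 2*π) = deriv p x := by
    intro x
    have hfun : (fun y => p (y + 2*π)) = p := funext hper
    calc deriv p (x + 2*π) = deriv (fun y => p (y + 2*π)) x :=
          (deriv_comp_add_const (f := p) (a := 2*π) (x := x)).symm
      _ = deriv p x := by rw [hfun]
  obtain ⟨M₁, hM₁0, hM₁⟩ := periodic_bound (deriv p) hdc hperd
  have hlip : ∀ x y, |p x - p y| ≤ M₁ * |x - y| := lip_bound p hpd hM₁
  intro σ
  have hw1 : ∀ t : ℝ, |1 - t^2| ≤ 1 + t^2 := fun t =>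
    abs_le.2 ⟨by nlinarith [sq_nonneg t], by nlinarith [sq_nonneg t]⟩
  have harc : ∀ a : ℝ, Continuous fun t : ℝ => arctan (t / a^2) := fun a =>
    Real.continuous_arctan.comp (by fun_prop)
  constructor
  · -- I1 part
    set F : ℝ → ℝ → ℝ := fun a t =>
      (p (arctan (t/a^2) + σ) + p (π - arctan (t/a^2) + σ) +
        (p (π + arctan (t/a^2) + σ) + p (2*π - arctan (t/a^2) + σ)))
      * ((1 - t^2) * ((1+t^2) ^ (-(5:ℝ)/2) * Real.sqrt (1+(t/a^2)^2))) with hF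
    set L1 : ℝ → ℝ := fun t =>
      (p σ + p (σ + π) + (p (σ + π) + p σ))
      * ((1 - t^2) * ((1+t^2) ^ (-(5:ℝ)/2) * 1)) with hL1
    have hmeas : ∀ᶠ a : ℝ in atTop, AEStronglyMeasurable (F a) (volume.restrict (Ioi 0)) := by
      refine Filter.Eventually.of_forall fun a => Continuous.aestronglyMeasurable ?_
      exact ((((hpc.comp ((harc a).add continuous_const)).add
        (hpc.comp ((continuous_const.sub (harc a)).add continuous_const))).add
        ((hpc.comp ((continuous_const.add (harc a)).add continuous_const)).add
        (hpc.comp ((continuous_const.sub (harc a)).add continuous_const)))).mul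
        ((by fun_prop : Continuous fun t : ℝ => 1 - t^2).mul (kerf_cont a)))
    have hbound : ∀ᶠ a : ℝ in atTop, ∀ᵐ t ∂(volume.restrict (Ioi 0)),
        ‖F a t‖ ≤ (4*M₀) * (1+t^2)⁻¹ := by
      filter_upwards [eventually_ge_atTop (1:ℝ)] with a ha
      refine (ae_restrict_iff' measurableSet_Ioi).2 (Filter.Eventually.of_forall fun t _ => ?_)
      have hv : |p (arctan (t/a^2) + σ) + p (π - arctan (t/a^2) + σ) +
          (p (π + arctan (t/a^2) + σ) + p (2*π - arctan (t/a^2) + σ))| ≤ 4*M₀ := by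
        have a1 := hM₀ (arctan (t/a^2) + σ)
        have a2 := hM₀ (π - arctan (t/a^2) + σ)
        have a3 := hM₀ (π + arctan (t/a^2) + σ)
        have a4 := hM₀ (2*π - arctan (t/a^2) + σ)
        have b1 := abs_add_le (p (arctan (t/a^2) + σ) + p (π - arctan (t/a^2) + σ))
          (p (π + arctan (t/a^2) + σ) + p (2*π - arctan (t/a^2) + σ))
        have b2 := abs_add_le (p (arctan (t/a^2) + σ)) (p (π - arctan (t/a^2) + σ))
        have b3 := abs_add_le (p (π + arctan (t/a^2) + σ)) (p (2*π - arctan (t/a^2) + σ))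
        linarith
      simp only [hF, Real.norm_eq_abs]
      exact piece_bound' ha _ _ hv (hw1 t)
    have hbint : Integrable (fun t : ℝ => (4*M₀) * (1+t^2)⁻¹) (volume.restrict (Ioi 0)) :=
      (integrable_inv_one_add_sq.const_mul _).integrableOn
    have hlim : ∀ᵐ t ∂(volume.restrict (Ioi 0)),
        Tendsto (fun a => F a t) atTop (𝓝 (L1 t)) := by
      refine (ae_restrict_iff' measurableSet_Ioi).2 (Filter.Eventually.of_forall fun t _ => ?_)
      have hε := tends_arctan t
      have g1 : Tendsto (fun a : ℝ => arctan (t/a^2) + σ) atTop (𝓝 σ) := by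
        simpa using hε.add_const σ
      have g2 : Tendsto (fun a : ℝ => π - arctan (t/a^2) + σ) atTop (𝓝 (σ + π)) := by
        have h := (tendsto_const_nhds (x := π)).sub hε |>.add_const σ
        rw [show π - 0 + σ = σ + π by ring] at h; exact h
      have g3 : Tendsto (fun a : ℝ => π + arctan (t/a^2) + σ) atTop (𝓝 (σ + π)) := by
        have h := (tendsto_const_nhds (x := π)).add hε |>.add_const σ
        rw [show π + 0 + σ = σ + π by ring] at h; exact h
      have g4 : Tendsto (fun a : ℝ => 2*π - arctan (t/a^2) + σ) atTop (𝓝 (σ + 2*π)) := by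
        have h := (tendsto_const_nhds (x := 2*π)).sub hε |>.add_const σ
        rw [show 2*π - 0 + σ = σ + 2*π by ring] at h; exact h
      have h1 := (hpc.tendsto σ).comp g1
      have h2 := (hpc.tendsto (σ+π)).comp g2
      have h3 := (hpc.tendsto (σ+π)).comp g3
      have h4 := (hpc.tendsto (σ+2*π)).comp g4
      rw [hper σ] at h4
      have hK := (tendsto_const_nhds (x := 1 - t^2)).mul
        ((tendsto_const_nhds (x := (1+t^2) ^ (-(5:ℝ)/2))).mul (tends_sqrtY t))
      exact ((h1.add h2).add (h3.add h4)).mul hK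
    have hDCT := MeasureTheory.tendsto_integral_filter_of_dominated_convergence
      (μ := volume.restrict (Ioi 0)) (F := F) (f := L1)
      (fun t => (4*M₀) * (1+t^2)⁻¹) hmeas hbound hbint hlim
    have hval : (∫ t in Ioi (0:ℝ), L1 t) = -cConst * (p σ + p (σ + π)) := by
      have e : ∀ t : ℝ, L1 t
          = ((t^2-1) / (t^2+1) ^ ((5:ℝ)/2)) * (-(p σ + p (σ + π) + (p (σ + π) + p σ))) := by
        intro t
        rw [hL1]
        simp only [mul_one]
        rw [show (p σ + p (σ + π) + (p (σ + π) + p σ)) * ((1 - t^2) * ((1+t^2) ^ (-(5:ℝ)/2)))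
          = ((1 - t^2) * (1+t^2) ^ (-(5:ℝ)/2)) * (p σ + p (σ + π) + (p (σ + π) + p σ)) by ring,
          point1 t]
        ring
      rw [MeasureTheory.setIntegral_congr_fun measurableSet_Ioi (fun t _ => e t),
        MeasureTheory.integral_mul_const]
      unfold cConst
      ring
    rw [← hval]
    refine hDCT.congr' ?_
    filter_upwards [eventually_ge_atTop (1:ℝ)] with a ha
    rw [I1_eq p hpc hM₀ σ ha, mul_div_cancel_left₀ _ (ne_of_gt (lt_of_lt_of_le one_pos ha))]
  · -- I2 part
    set G : ℝ → ℝ → ℝ := fun a t => a^2 *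
      (((p (arctan (t/a^2) + σ) - p (-arctan (t/a^2) + σ)) +
        (p (π + arctan (t/a^2) + σ) - p (π - arctan (t/a^2) + σ)))
      * (2 * t * ((1+t^2) ^ (-(5:ℝ)/2) * Real.sqrt (1+(t/a^2)^2)))) with hG
    set L2 : ℝ → ℝ := fun t =>
      (t * (2 * deriv p σ) + t * (2 * deriv p (σ + π)))
      * (2 * t * ((1+t^2) ^ (-(5:ℝ)/2) * 1)) with hL2
    have hmeas : ∀ᶠ a : ℝ in atTop, AEStronglyMeasurable (G a) (volume.restrict (Ioi 0)) := by
      refine Filter.Eventually.of_forall fun a => Continuous.aestronglyMeasurable ?_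
      refine continuous_const.mul (Continuous.mul ?_ ?_)
      · exact ((hpc.comp ((harc a).add continuous_const)).sub
          (hpc.comp ((harc a).neg.add continuous_const))).add
          ((hpc.comp ((continuous_const.add (harc a)).add continuous_const)).sub
          (hpc.comp ((continuous_const.sub (harc a)).add continuous_const)))
      · exact (by fun_prop : Continuous fun t : ℝ => 2 * t).mul (kerf_cont a)
    have hbound : ∀ᶠ a : ℝ in atTop, ∀ᵐ t ∂(volume.restrict (Ioi 0)),
        ‖G a t‖ ≤ (8*M₁) * (1+t^2)⁻¹ := by
      filter_upwards [eventually_ge_atTop (1:ℝ)] with a ha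
      refine (ae_restrict_iff' measurableSet_Ioi).2 (Filter.Eventually.of_forall fun t ht => ?_)
      have ht0 : (0:ℝ) < t := ht
      have ha0 : (0:ℝ) < a := lt_of_lt_of_le one_pos ha
      have hε0 : 0 ≤ arctan (t/a^2) := (arctan_pos' (by positivity)).le
      have hd1 : |p (arctan (t/a^2) + σ) - p (-arctan (t/a^2) + σ)|
          ≤ M₁ * (2 * arctan (t/a^2)) := by
        have habs : |2 * arctan (t/a^2)| = 2 * arctan (t/a^2) :=
          abs_of_nonneg (by linarith)
        have := hlip (arctan (t/a^2) + σ) (-arctan (t/a^2) + σ)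
        rwa [show (arctan (t/a^2) + σ) - (-arctan (t/a^2) + σ) = 2 * arctan (t/a^2) by ring,
          habs] at this
      have hd2 : |p (π + arctan (t/a^2) + σ) - p (π - arctan (t/a^2) + σ)|
          ≤ M₁ * (2 * arctan (t/a^2)) := by
        have habs : |2 * arctan (t/a^2)| = 2 * arctan (t/a^2) :=
          abs_of_nonneg (by linarith)
        have := hlip (π + arctan (t/a^2) + σ) (π - arctan (t/a^2) + σ)
        rwa [show (π + arctan (t/a^2) + σ) - (π - arctan (t/a^2) + σ) = 2 * arctan (t/a^2)
          by ring, habs] at this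
      simp only [hG, Real.norm_eq_abs]
      exact G_bound ha ht0 _ _ hM₁0 hd1 hd2
    have hbint : Integrable (fun t : ℝ => (8*M₁) * (1+t^2)⁻¹) (volume.restrict (Ioi 0)) :=
      (integrable_inv_one_add_sq.const_mul _).integrableOn
    have hlim : ∀ᵐ t ∂(volume.restrict (Ioi 0)),
        Tendsto (fun a => G a t) atTop (𝓝 (L2 t)) := by
      refine (ae_restrict_iff' measurableSet_Ioi).2 (Filter.Eventually.of_forall fun t ht => ?_)
      have ht0 : (0:ℝ) < t := ht
      have hε := tends_arctan t
      have hεpos : ∀ᶠ a : ℝ in atTop, 0 < arctan (t/a^2) := by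
        filter_upwards [eventually_ge_atTop (1:ℝ)] with a ha
        have ha0 : (0:ℝ) < a := lt_of_lt_of_le one_pos ha
        exact arctan_pos' (by positivity)
      have hεne : Tendsto (fun a : ℝ => arctan (t/a^2)) atTop (𝓝[≠] (0:ℝ)) := by
        refine tendsto_nhdsWithin_iff.mpr ⟨hε, ?_⟩
        filter_upwards [hεpos] with a ha
        exact Set.mem_compl_singleton_iff.mpr (ne_of_gt ha)
      have hune : Tendsto (fun a : ℝ => t/a^2) atTop (𝓝[≠] (0:ℝ)) := by
        refine tendsto_nhdsWithin_iff.mpr ⟨tends_div_sq t, ?_⟩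
        filter_upwards [eventually_ge_atTop (1:ℝ)] with a ha
        have ha0 : (0:ℝ) < a := lt_of_lt_of_le one_pos ha
        exact Set.mem_compl_singleton_iff.mpr (ne_of_gt (by positivity))
      -- a² arctan(t/a²) → t
      have ht2 : Tendsto (fun a : ℝ => a^2 * arctan (t/a^2)) atTop (𝓝 t) := by
        have hsl0 : HasDerivAt arctan 1 0 := by
          have := Real.hasDerivAt_arctan 0
          norm_num at this
          exact this
        have hsl := hasDerivAt_iff_tendsto_slope.mp hsl0
        have hc := hsl.comp hune
        have hmul := (tendsto_const_nhds (x := t)).mul hc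
        rw [mul_one] at hmul
        refine hmul.congr' ?_
        filter_upwards [eventually_ge_atTop (1:ℝ)] with a ha
        have ha0 : (0:ℝ) < a := lt_of_lt_of_le one_pos ha
        simp only [Function.comp_apply, slope_def_field, arctan_zero]
        rw [sub_zero, sub_zero]
        field_simp
      -- derivative facts
      have hGd1 : HasDerivAt (fun x : ℝ => p (x + σ) - p (-x + σ)) (2 * deriv p σ) 0 := by
        have d1 : HasDerivAt (fun x : ℝ => p (x + σ)) (deriv p (0 + σ) * 1) 0 :=
          (hpd (0 + σ)).hasDerivAt.comp 0 ((hasDerivAt_id 0).add_const σ)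
        have d2 : HasDerivAt (fun x : ℝ => p (-x + σ)) (deriv p (-0 + σ) * (-1)) 0 :=
          (hpd (-0 + σ)).hasDerivAt.comp 0 (((hasDerivAt_id 0).neg).add_const σ)
        have d := d1.sub d2
        norm_num at d
        have : deriv p σ + deriv p σ = 2 * deriv p σ := by ring
        rwa [this] at d
      have hGd2 : HasDerivAt (fun x : ℝ => p (π + x + σ) - p (π - x + σ))
          (2 * deriv p (σ + π)) 0 := by
        have d1 : HasDerivAt (fun x : ℝ => p (π + x + σ)) (deriv p (π + 0 + σ) * 1) 0 :=
          (hpd (π + 0 + σ)).hasDerivAt.comp 0 (((hasDerivAt_id 0).const_add π).add_const σ)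
        have d2 : HasDerivAt (fun x : ℝ => p (π - x + σ)) (deriv p (π - 0 + σ) * (-1)) 0 := by
          have hinner : HasDerivAt (fun x : ℝ => π - x + σ) (-1) 0 := by
            have := ((hasDerivAt_id (0:ℝ)).neg.const_add π).add_const σ
            simpa [sub_eq_add_neg] using this
          exact (hpd (π - 0 + σ)).hasDerivAt.comp 0 hinner
        have d := d1.sub d2
        norm_num at d
        have harg : π + σ = σ + π := by ring
        rw [harg] at d
        have : deriv p (σ + π) + deriv p (σ + π) = 2 * deriv p (σ + π) := by ring
        rwa [this] at d
      have hs1 := (hasDerivAt_iff_tendsto_slope.mp hGd1).comp hεne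
      have hs2 := (hasDerivAt_iff_tendsto_slope.mp hGd2).comp hεne
      have hG10 : p ((0:ℝ) + σ) - p (-(0:ℝ) + σ) = 0 := by norm_num
      have hG20 : p (π + (0:ℝ) + σ) - p (π - (0:ℝ) + σ) = 0 := by norm_num
      have hD1 : Tendsto (fun a : ℝ => a^2 *
          (p (arctan (t/a^2) + σ) - p (-arctan (t/a^2) + σ))) atTop
          (𝓝 (t * (2 * deriv p σ))) := by
        refine (ht2.mul hs1).congr' ?_
        filter_upwards [hεpos] with a ha
        have hne : arctan (t/a^2) ≠ 0 := ne_of_gt ha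
        simp only [Function.comp_apply, slope_def_field, hG10]
        rw [sub_zero, sub_zero]
        field_simp
      have hD2 : Tendsto (fun a : ℝ => a^2 *
          (p (π + arctan (t/a^2) + σ) - p (π - arctan (t/a^2) + σ))) atTop
          (𝓝 (t * (2 * deriv p (σ + π)))) := by
        refine (ht2.mul hs2).congr' ?_
        filter_upwards [hεpos] with a ha
        have hne : arctan (t/a^2) ≠ 0 := ne_of_gt ha
        simp only [Function.comp_apply, slope_def_field, hG20]
        rw [sub_zero, sub_zero]
        field_simp
      have hK2 := (tendsto_const_nhds (x := 2 * t)).mul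
        ((tendsto_const_nhds (x := (1+t^2) ^ (-(5:ℝ)/2))).mul (tends_sqrtY t))
      have hT := (hD1.add hD2).mul hK2
      refine hT.congr fun a => ?_
      simp only [hG]
      ring
    have hDCT := MeasureTheory.tendsto_integral_filter_of_dominated_convergence
      (μ := volume.restrict (Ioi 0)) (F := G) (f := L2)
      (fun t => (8*M₁) * (1+t^2)⁻¹) hmeas hbound hbint hlim
    have hval : (∫ t in Ioi (0:ℝ), L2 t) = -dConst * (deriv p σ + deriv p (σ + π)) := by
      have e : ∀ t : ℝ, L2 t
          = (t^2 / (1+t^2) ^ ((5:ℝ)/2)) * (4 * (deriv p σ + deriv p (σ + π))) := by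
        intro t
        rw [hL2]
        simp only [mul_one]
        calc (t * (2 * deriv p σ) + t * (2 * deriv p (σ + π))) * (2 * t * ((1+t^2) ^ (-(5:ℝ)/2)))
            = (4*t^2*(1+t^2) ^ (-(5:ℝ)/2)) * (deriv p σ + deriv p (σ + π)) := by ring
          _ = (4*(t^2 / (1+t^2) ^ ((5:ℝ)/2))) * (deriv p σ + deriv p (σ + π)) := by
              rw [point2]
          _ = (t^2 / (1+t^2) ^ ((5:ℝ)/2)) * (4 * (deriv p σ + deriv p (σ + π))) := by ring
      rw [MeasureTheory.setIntegral_congr_fun measurableSet_Ioi (fun t _ => e t),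
        MeasureTheory.integral_mul_const]
      unfold dConst
      ring
    rw [← hval]
    refine hDCT.congr' ?_
    filter_upwards [eventually_ge_atTop (1:ℝ)] with a ha
    rw [I2_eq p hpc hM₀ hper σ ha, ← mul_assoc, ← sq, ← MeasureTheory.integral_const_mul]
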